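/- Let B be an n×n exchange matrix. Suppose a positive ℚ-basis for B exists and that the mutation fan ℱ_B has a rational part ℱ'. Then a family of vectors in ℚ^n is a positive ℚ-basis for B if and only if it consists of exactly one nonzero vector in each ray of ℱ': each vector of the family lies on a ray of ℱ' and is nonzero, each ray of ℱ' contains exactly one vector of the family, and distinct members of the family lie on distinct rays. -/

import Mathlib

open scoped BigOperators

namespace MutationFanPaper

/-- An exchange matrix: a skew-symmetrizable `n × n` integer matrix. -/
def IsExchangeMatrix {n : ℕ} (B : Matrix (Fin n) (Fin n) ℤ) : Prop :=
  ∃ d : Fin n → ℤ, (∀ i, 0 < d i) ∧ ∀ i j, d i * B i j = -(d j * B j i)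

/-- Matrix mutation in direction `k`. -/
def mutate {n : ℕ} (B : Matrix (Fin n) (Fin n) ℤ) (k : Fin n) : Matrix (Fin n) (Fin n) ℤ :=
  fun i j =>
    if i = k ∨ j = k then -B i j
    else B i j + Int.sign (B k j) * max (B i k * B k j) 0

/-- The mutation map `η_k^B : ℝⁿ → ℝⁿ`. -/
noncomputable def etaStep {n : ℕ} (B : Matrix (Fin n) (Fin n) ℤ) (k : Fin n) (a : Fin n → ℝ) : Fin n → ℝ :=
  fun j =>
    if j = k then -a k
    else if 0 ≤ a k ∧ 0 ≤ B k j then a j + a k * (B k j : ℝ)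
    else if a k ≤ 0 ∧ B k j ≤ 0 then a j - a k * (B k j : ℝ)
    else a j

/-- `etaSeq B κ` is the mutation map `η_κ^B`, where the list `κ` records the indices in
order of application (the head of the list is applied first, using the matrix `B` itself). -/
noncomputable def etaSeq {n : ℕ} (B : Matrix (Fin n) (Fin n) ℤ) : List (Fin n) → (Fin n → ℝ) → Fin n → ℝ
  | [], a => a
  | k :: κ, a => etaSeq (mutate B k) κ (etaStep B k a)

/-- Iterated matrix mutation along a list of indices; the head is applied first. -/
def mutateSeq {n : ℕ} (B : Matrix (Fin n) (Fin n) ℤ) : List (Fin n) → Matrix (Fin n) (Fin n) ℤ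
  | [] => B
  | k :: κ => mutateSeq (mutate B k) κ

/-- The copy of ℤ inside ℝ, as a subring. -/
def intSR : Subring ℝ := (Int.castRingHom ℝ).range

/-- The copy of ℚ inside ℝ, as a subring. -/
noncomputable def ratSR : Subring ℝ := (Rat.castHom ℝ).range

/-- The formal expression `Σ_{i ∈ S} c i • v i` is a `B`-coherent linear relation. -/
def IsBCoherentRel {n : ℕ} (B : Matrix (Fin n) (Fin n) ℤ) {ι : Type*} (S : Finset ι)
    (v : ι → Fin n → ℝ) (c : ι → ℝ) : Prop :=
  ∀ κ : List (Fin n),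
    (∑ i ∈ S, c i • etaSeq B κ (v i)) = 0 ∧
    (∑ i ∈ S, c i • (fun j => min (etaSeq B κ (v i) j) 0)) = 0

/-- The formal expression `a - Σ_{i ∈ S} c i • v i` is a `B`-coherent linear relation. -/
def IsBCoherentDiff {n : ℕ} (B : Matrix (Fin n) (Fin n) ℤ) (a : Fin n → ℝ) {ι : Type*}
    (S : Finset ι) (v : ι → Fin n → ℝ) (c : ι → ℝ) : Prop :=
  ∀ κ : List (Fin n),
    (etaSeq B κ a - ∑ i ∈ S, c i • etaSeq B κ (v i)) = 0 ∧
    ((fun j => min (etaSeq B κ a j) 0) -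
      ∑ i ∈ S, c i • (fun j => min (etaSeq B κ (v i) j) 0)) = 0

/-- The family `b` is an `R`-spanning set for `B` (a family of vectors in `Rⁿ` such that every
`a ∈ Rⁿ` admits a `B`-coherent relation `a - Σ_{i ∈ S} c i • b i` with coefficients in `R`). -/
def SpanningOver {n : ℕ} (R : Subring ℝ) (B : Matrix (Fin n) (Fin n) ℤ) {ι : Type*}
    (b : ι → Fin n → ℝ) : Prop :=
  (∀ i j, b i j ∈ R) ∧
  ∀ a : Fin n → ℝ, (∀ j, a j ∈ R) →
    ∃ (S : Finset ι) (c : ι → ℝ), (∀ i ∈ S, c i ∈ R) ∧ IsBCoherentDiff B a S b c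

/-- The family `b` is an `R`-independent set for `B`. -/
def IndependentOver {n : ℕ} (R : Subring ℝ) (B : Matrix (Fin n) (Fin n) ℤ) {ι : Type*}
    (b : ι → Fin n → ℝ) : Prop :=
  (∀ i j, b i j ∈ R) ∧
  ∀ (S : Finset ι) (c : ι → ℝ), (∀ i ∈ S, c i ∈ R) → IsBCoherentRel B S b c →
    ∀ i ∈ S, c i = 0

/-- The family `b` is an `R`-basis for `B`. -/
def BasisOver {n : ℕ} (R : Subring ℝ) (B : Matrix (Fin n) (Fin n) ℤ) {ι : Type*}
    (b : ι → Fin n → ℝ) : Prop :=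
  SpanningOver R B b ∧ IndependentOver R B b

/-- The family `b` is a positive `R`-basis for `B`. -/
def PositiveBasisOver {n : ℕ} (R : Subring ℝ) (B : Matrix (Fin n) (Fin n) ℤ) {ι : Type*}
    (b : ι → Fin n → ℝ) : Prop :=
  BasisOver R B b ∧
  ∀ a : Fin n → ℝ, (∀ j, a j ∈ R) →
    ∃ (S : Finset ι) (c : ι → ℝ), (∀ i ∈ S, c i ∈ R ∧ 0 ≤ c i) ∧ IsBCoherentDiff B a S b c

/-- The relation `a ≡^B a'`: all mutation maps give componentwise equal signs. -/
def eqB {n : ℕ} (B : Matrix (Fin n) (Fin n) ℤ) (a a' : Fin n → ℝ) : Prop :=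
  ∀ (κ : List (Fin n)) (j : Fin n),
    Real.sign (etaSeq B κ a j) = Real.sign (etaSeq B κ a' j)

/-- A `B`-class: an equivalence class of `≡^B`. -/
def IsBClass {n : ℕ} (B : Matrix (Fin n) (Fin n) ℤ) (C : Set (Fin n → ℝ)) : Prop :=
  ∃ a, C = {a' | eqB B a a'}

/-- A `B`-cone: the closure of a `B`-class. -/
def IsBCone {n : ℕ} (B : Matrix (Fin n) (Fin n) ℤ) (C : Set (Fin n → ℝ)) : Prop :=
  ∃ D, IsBClass B D ∧ C = closure D

/-- A convex cone: a set closed under addition and positive scaling. -/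
def IsConvexCone {n : ℕ} (C : Set (Fin n → ℝ)) : Prop :=
  (∀ x ∈ C, ∀ y ∈ C, x + y ∈ C) ∧ ∀ x ∈ C, ∀ r : ℝ, 0 < r → r • x ∈ C

/-- `F` is a face of the convex cone `C`: a convex subset such that any line segment
contained in `C` whose interior meets `F` lies entirely in `F`. -/
def IsFaceOf {n : ℕ} (C F : Set (Fin n → ℝ)) : Prop :=
  F ⊆ C ∧ Convex ℝ F ∧
    ∀ x y : Fin n → ℝ, segment ℝ x y ⊆ C → (openSegment ℝ x y ∩ F).Nonempty →
      segment ℝ x y ⊆ F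

/-- The mutation fan `ℱ_B`: all `B`-cones and all faces of `B`-cones. -/
def MutFan {n : ℕ} (B : Matrix (Fin n) (Fin n) ℤ) : Set (Set (Fin n → ℝ)) :=
  {C | IsBCone B C ∨ ∃ D, IsBCone B D ∧ IsFaceOf D C}

/-- A fan: a collection of closed convex cones, closed under taking faces, in which the
intersection of any two cones is a face of each. -/
def IsFan {n : ℕ} (F : Set (Set (Fin n → ℝ))) : Prop :=
  (∀ C ∈ F, IsClosed C ∧ IsConvexCone C) ∧
  (∀ C ∈ F, ∀ G, IsFaceOf C G → G ∈ F) ∧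
  ∀ C ∈ F, ∀ D ∈ F, IsFaceOf C (C ∩ D) ∧ IsFaceOf D (C ∩ D)

/-- A set of vectors is sign-coherent if no two of its members have strictly opposite
signs in any coordinate. -/
def SignCoherentSet {n : ℕ} (S : Set (Fin n → ℝ)) : Prop :=
  ∀ x ∈ S, ∀ y ∈ S, ∀ j, ¬(x j < 0 ∧ 0 < y j)

/-- The ray spanned by a vector `v`. -/
def rayOf {n : ℕ} (v : Fin n → ℝ) : Set (Fin n → ℝ) :=
  {x | ∃ t : ℝ, 0 ≤ t ∧ x = t • v}

/-- `C` is a ray of the fan `F`: a one-dimensional cone belonging to `F`. -/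
def IsRayOf {n : ℕ} (F : Set (Set (Fin n → ℝ))) (C : Set (Fin n → ℝ)) : Prop :=
  C ∈ F ∧ ∃ v : Fin n → ℝ, v ≠ 0 ∧ C = rayOf v

/-- A simplicial cone: the nonnegative span of finitely many linearly independent vectors. -/
def IsSimplicialCone {n : ℕ} (C : Set (Fin n → ℝ)) : Prop :=
  ∃ (k : ℕ) (v : Fin k → Fin n → ℝ), LinearIndependent ℝ v ∧
    C = {x | ∃ c : Fin k → ℝ, (∀ i, 0 ≤ c i) ∧ x = ∑ i, c i • v i}

/-- A rational cone: the nonnegative span of finitely many rational vectors. -/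
def IsRationalCone {n : ℕ} (C : Set (Fin n → ℝ)) : Prop :=
  ∃ (k : ℕ) (v : Fin k → Fin n → ℝ), (∀ i j, ∃ q : ℚ, v i j = (q : ℝ)) ∧
    C = {x | ∃ c : Fin k → ℝ, (∀ i, 0 ≤ c i) ∧ x = ∑ i, c i • v i}

/-- `F'` is the rational part of the fan `F`. -/
def IsRationalPart {n : ℕ} (F F' : Set (Set (Fin n → ℝ))) : Prop :=
  IsFan F' ∧ (∀ C ∈ F', IsRationalCone C) ∧
  (∀ C ∈ F', ∃ D ∈ F, C ⊆ D) ∧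
  ∀ C ∈ F, ∃ D ∈ F', D ⊆ C ∧ (∀ D' ∈ F', D' ⊆ C → D' ⊆ D) ∧
    ∀ x ∈ C, (∀ j, ∃ q : ℚ, x j = (q : ℝ)) → x ∈ D

/-- `v` is the smallest nonzero integer vector in the cone `C`. -/
def IsSmallestIntVec {n : ℕ} (C : Set (Fin n → ℝ)) (v : Fin n → ℝ) : Prop :=
  v ∈ C ∧ v ≠ 0 ∧ (∀ j, ∃ m : ℤ, v j = (m : ℝ)) ∧
    ∀ w ∈ C, w ≠ 0 → (∀ j, ∃ m : ℤ, w j = (m : ℝ)) → ‖v‖ ≤ ‖w‖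

end MutationFanPaper

/-!
A positive ℚ-basis vector `b` splits as a sum of two rational vectors that stay sign-coherent
under all mutation maps only into nonnegative multiples of `b`: expand both summands
positively; independence forces their sum to be the trivial expansion of `b`. The
rational cones of `F'` inside the `B`-cone of `b` consist of such summands, so the smallest face
through `b` of the largest of them is the ray of `b`, a ray of `F'`. Conversely, for a ray `C`
of `F'` and a rational `w ≠ 0` on it, the terms of a positive expansion of `w` lie in the largest
rational cone `D` inside the `B`-cone of `w`, and `C` is a face of `D`; so some basis vector lies
on `C`, and independence makes it unique. Finally, two families with one nonzero rational vector
on each ray differ by a reindexing and positive rational rescalings, which preserve positive bases.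
-/

namespace MutationFanPaper

section

variable {n : ℕ} {B : Matrix (Fin n) (Fin n) ℤ}

lemma etaStep_apply (B : Matrix (Fin n) (Fin n) ℤ) (k : Fin n) (a : Fin n → ℝ) (j : Fin n) :
    etaStep B k a j = if j = k then -a k else
      a j + max (a k) 0 * max (B k j : ℝ) 0 - min (a k) 0 * min (B k j : ℝ) 0 := by
  have hB : (0 : ℝ) ≤ B k j ↔ 0 ≤ B k j := Int.cast_nonneg_iff
  have hB' : (B k j : ℝ) ≤ 0 ↔ B k j ≤ 0 := by exact_mod_cast Iff.rfl
  unfold etaStep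
  split_ifs with hj h1 h2
  · rfl
  · rw [max_eq_left h1.1, min_eq_right h1.1, max_eq_left (hB.2 h1.2)]; ring
  · rw [max_eq_right h2.1, min_eq_left h2.1, min_eq_left (hB'.2 h2.2)]; ring
  · rcases le_total 0 (a k) with ha | ha
    · have hb : (B k j : ℝ) ≤ 0 := hB'.2 (le_of_not_ge (not_and.1 h1 ha))
      simp [max_eq_left ha, min_eq_right ha, max_eq_right hb]
    · have hb : (0 : ℝ) ≤ B k j := hB.2 (le_of_not_ge (not_and.1 h2 ha))
      simp [max_eq_right ha, min_eq_right hb]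

lemma continuous_etaStep (B : Matrix (Fin n) (Fin n) ℤ) (k : Fin n) :
    Continuous (etaStep B k) := by
  refine continuous_pi fun j => ?_
  simp only [etaStep_apply]
  split_ifs
  · fun_prop
  · fun_prop

lemma continuous_etaSeq (B : Matrix (Fin n) (Fin n) ℤ) (κ : List (Fin n)) :
    Continuous (etaSeq B κ) := by
  induction κ generalizing B with
  | nil => exact continuous_id
  | cons k κ ih => exact (ih (mutate B k)).comp (continuous_etaStep B k)

lemma max_mul_zero_of_nonneg {t : ℝ} (ht : 0 ≤ t) (x : ℝ) : max (t * x) 0 = t * max x 0 := by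
  rw [mul_max_of_nonneg _ _ ht, mul_zero]

lemma min_mul_zero_of_nonneg {t : ℝ} (ht : 0 ≤ t) (x : ℝ) : min (t * x) 0 = t * min x 0 := by
  rw [mul_min_of_nonneg _ _ ht, mul_zero]

lemma etaStep_smul (B : Matrix (Fin n) (Fin n) ℤ) (k : Fin n) (a : Fin n → ℝ) {t : ℝ}
    (ht : 0 ≤ t) : etaStep B k (t • a) = t • etaStep B k a := by
  funext j
  simp only [etaStep_apply, Pi.smul_apply, smul_eq_mul, max_mul_zero_of_nonneg ht,
    min_mul_zero_of_nonneg ht]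
  split_ifs <;> ring

lemma etaSeq_smul (B : Matrix (Fin n) (Fin n) ℤ) (κ : List (Fin n)) (a : Fin n → ℝ) {t : ℝ}
    (ht : 0 ≤ t) : etaSeq B κ (t • a) = t • etaSeq B κ a := by
  induction κ generalizing B a with
  | nil => rfl
  | cons k κ ih => simp only [etaSeq, etaStep_smul B k a ht, ih]

def IsSignCoherentPair (B : Matrix (Fin n) (Fin n) ℤ) (x y : Fin n → ℝ) : Prop :=
  ∀ κ j, 0 ≤ etaSeq B κ x j * etaSeq B κ y j

lemma max_add_zero_of_mul_nonneg {a b : ℝ} (h : 0 ≤ a * b) :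
    max (a + b) 0 = max a 0 + max b 0 := by
  rcases mul_nonneg_iff.1 h with ⟨ha, hb⟩ | ⟨ha, hb⟩
  · simp [ha, hb, add_nonneg ha hb]
  · simp [ha, hb, add_nonpos ha hb]

lemma min_add_zero_of_mul_nonneg {a b : ℝ} (h : 0 ≤ a * b) :
    min (a + b) 0 = min a 0 + min b 0 := by
  rcases mul_nonneg_iff.1 h with ⟨ha, hb⟩ | ⟨ha, hb⟩
  · simp [ha, hb, add_nonneg ha hb]
  · simp [ha, hb, add_nonpos ha hb]

lemma etaSeq_add {x y : Fin n → ℝ} (h : IsSignCoherentPair B x y) (κ : List (Fin n)) :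
    etaSeq B κ (x + y) = etaSeq B κ x + etaSeq B κ y := by
  induction κ generalizing B x y with
  | nil => rfl
  | cons k κ ih =>
    have hk : 0 ≤ x k * y k := h [] k
    have hstep : etaStep B k (x + y) = etaStep B k x + etaStep B k y := by
      funext j
      simp only [etaStep_apply, Pi.add_apply, max_add_zero_of_mul_nonneg hk,
        min_add_zero_of_mul_nonneg hk]
      split_ifs <;> ring
    simp only [etaSeq, hstep]
    exact ih fun κ' => h (k :: κ')

def SignFollows (p q : ℝ) : Prop :=
  (0 ≤ p → 0 ≤ q) ∧ (p ≤ 0 → q ≤ 0)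

lemma signFollows_of_sign_eq {p q : ℝ} (h : Real.sign p = Real.sign q) : SignFollows p q := by
  refine ⟨fun hp => le_of_not_gt fun hq => ?_, fun hp => le_of_not_gt fun hq => ?_⟩
  · rw [Real.sign_of_neg hq] at h
    rcases hp.eq_or_lt with rfl | hp
    · simp at h
    · rw [Real.sign_of_pos hp] at h; norm_num at h
  · rw [Real.sign_of_pos hq] at h
    rcases hp.eq_or_lt with rfl | hp
    · simp at h
    · rw [Real.sign_of_neg hp] at h; norm_num at h

lemma SignFollows.sign_add_mul {p q ε : ℝ} (h : SignFollows p q) (hε : 0 < ε) :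
    Real.sign (q + ε * p) = Real.sign p := by
  rcases lt_trichotomy p 0 with hp | rfl | hp
  · rw [Real.sign_of_neg hp, Real.sign_of_neg (by nlinarith [h.2 hp.le])]
  · simp [le_antisymm (h.2 le_rfl) (h.1 le_rfl)]
  · rw [Real.sign_of_pos hp, Real.sign_of_pos (by nlinarith [h.1 hp.le])]

def bConeOf (B : Matrix (Fin n) (Fin n) ℤ) (a : Fin n → ℝ) : Set (Fin n → ℝ) :=
  {x | ∀ κ j, SignFollows (etaSeq B κ a j) (etaSeq B κ x j)}

lemma self_mem_bConeOf (a : Fin n → ℝ) : a ∈ bConeOf B a :=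
  fun _ _ => ⟨id, id⟩

lemma smul_mem_bConeOf {a x : Fin n → ℝ} (hx : x ∈ bConeOf B a) {t : ℝ} (ht : 0 ≤ t) :
    t • x ∈ bConeOf B a := by
  intro κ j
  simp only [etaSeq_smul B κ x ht, Pi.smul_apply, smul_eq_mul]
  exact ⟨fun h => mul_nonneg ht ((hx κ j).1 h),
    fun h => mul_nonpos_of_nonneg_of_nonpos ht ((hx κ j).2 h)⟩

lemma isSignCoherentPair_of_mem_bConeOf {a x y : Fin n → ℝ} (hx : x ∈ bConeOf B a)
    (hy : y ∈ bConeOf B a) : IsSignCoherentPair B x y := by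
  intro κ j
  rcases le_total 0 (etaSeq B κ a j) with ha | ha
  · exact mul_nonneg ((hx κ j).1 ha) ((hy κ j).1 ha)
  · exact mul_nonneg_of_nonpos_of_nonpos ((hx κ j).2 ha) ((hy κ j).2 ha)

lemma isClosed_bConeOf (B : Matrix (Fin n) (Fin n) ℤ) (a : Fin n → ℝ) :
    IsClosed (bConeOf B a) := by
  have hcont (κ : List (Fin n)) (j : Fin n) : Continuous fun x => etaSeq B κ x j :=
    (continuous_apply j).comp (continuous_etaSeq B κ)
  simp only [bConeOf, SignFollows, Set.ofPred_forall, Set.ofPred_and]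
  exact isClosed_iInter fun κ => isClosed_iInter fun j =>
    (isClosed_iInter fun _ => isClosed_le continuous_const (hcont κ j)).inter
      (isClosed_iInter fun _ => isClosed_le (hcont κ j) continuous_const)

lemma closure_setOf_eqB (B : Matrix (Fin n) (Fin n) ℤ) (a : Fin n → ℝ) :
    closure {x | eqB B a x} = bConeOf B a := by
  refine (closure_minimal (fun x (hx : eqB B a x) κ j => signFollows_of_sign_eq (hx κ j))
    (isClosed_bConeOf B a)).antisymm fun x hx => ?_
  have hclass : ∀ ε : ℝ, 0 < ε → eqB B a (x + ε • a) := by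
    intro ε hε κ j
    rw [etaSeq_add (isSignCoherentPair_of_mem_bConeOf hx
      (smul_mem_bConeOf (self_mem_bConeOf a) hε.le)) κ, etaSeq_smul B κ a hε.le]
    exact ((hx κ j).sign_add_mul hε).symm
  have htends : Filter.Tendsto (fun ε : ℝ => x + ε • a) (nhdsWithin 0 (Set.Ioi 0)) (nhds x) := by
    have : Continuous fun ε : ℝ => x + ε • a := by fun_prop
    simpa using (this.tendsto 0).mono_left nhdsWithin_le_nhds
  exact mem_closure_of_tendsto htends (eventually_nhdsWithin_of_forall fun ε hε => hclass ε hε)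

lemma bConeOf_mem_mutFan (B : Matrix (Fin n) (Fin n) ℤ) (a : Fin n → ℝ) :
    bConeOf B a ∈ MutFan B :=
  Or.inl ⟨_, ⟨a, rfl⟩, (closure_setOf_eqB B a).symm⟩

/-- `B`-coherent linear relations are exactly the linear relations among the `mutImage B x`. -/
noncomputable def mutImage (B : Matrix (Fin n) (Fin n) ℤ) (x : Fin n → ℝ) :
    List (Fin n) → Fin n → ℝ × ℝ :=
  fun κ j => (etaSeq B κ x j, min (etaSeq B κ x j) 0)

lemma mutImage_smul (x : Fin n → ℝ) {t : ℝ} (ht : 0 ≤ t) :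
    mutImage B (t • x) = t • mutImage B x := by
  funext κ j
  simp only [mutImage, etaSeq_smul B κ x ht, Pi.smul_apply, smul_eq_mul, Prod.smul_mk,
    min_mul_zero_of_nonneg ht]

lemma mutImage_zero : mutImage B 0 = 0 := by
  simpa using mutImage_smul (B := B) 0 le_rfl

lemma mutImage_add {x y : Fin n → ℝ} (h : IsSignCoherentPair B x y) :
    mutImage B (x + y) = mutImage B x + mutImage B y := by
  funext κ j
  simp only [mutImage, etaSeq_add h κ, Pi.add_apply, Prod.mk_add_mk,
    min_add_zero_of_mul_nonneg (h κ j)]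

lemma eq_sum_of_mutImage_eq {ι : Type*} {S : Finset ι} {a : Fin n → ℝ} {v : ι → Fin n → ℝ}
    {c : ι → ℝ} (h : mutImage B a = ∑ i ∈ S, c i • mutImage B (v i)) :
    a = ∑ i ∈ S, c i • v i := by
  funext j
  simpa [mutImage, Finset.sum_apply, Prod.fst_sum, etaSeq] using
    congrArg Prod.fst (congrFun (congrFun h []) j)

section Coherent

variable {ι : Type*} {S : Finset ι} {v : ι → Fin n → ℝ} {c : ι → ℝ}

lemma isBCoherentDiff_iff {a : Fin n → ℝ} :
    IsBCoherentDiff B a S v c ↔ mutImage B a = ∑ i ∈ S, c i • mutImage B (v i) := by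
  simp only [IsBCoherentDiff, mutImage, funext_iff, Prod.ext_iff, Finset.sum_apply,
    Prod.fst_sum, Prod.snd_sum, Pi.smul_apply, Prod.smul_fst, Prod.smul_snd, sub_eq_zero,
    forall_and]

lemma isBCoherentRel_iff :
    IsBCoherentRel B S v c ↔ ∑ i ∈ S, c i • mutImage B (v i) = 0 := by
  simp only [IsBCoherentRel, mutImage, funext_iff, Prod.ext_iff, Finset.sum_apply,
    Prod.fst_sum, Prod.snd_sum, Pi.zero_apply, Pi.smul_apply, Prod.smul_fst,
    Prod.smul_snd, Prod.fst_zero, Prod.snd_zero, forall_and]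

lemma signFollows_of_sum_eq {p : ℝ} {s : ι → ℝ} (hc : ∀ i ∈ S, 0 ≤ c i)
    (hp : p = ∑ i ∈ S, c i * s i) (hpmin : min p 0 = ∑ i ∈ S, c i * min (s i) 0) {i : ι}
    (hi : i ∈ S) (hci : 0 < c i) : SignFollows p (s i) := by
  constructor
  · intro h0
    rw [min_eq_right h0, eq_comm, Finset.sum_eq_zero_iff_of_nonpos fun i hi =>
      mul_nonpos_of_nonneg_of_nonpos (hc i hi) (min_le_right _ _)] at hpmin
    simpa [hci.ne'] using hpmin i hi
  · intro h0
    have hsum : ∑ i ∈ S, c i * (s i - min (s i) 0) = 0 := by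
      simp only [mul_sub, Finset.sum_sub_distrib, ← hp, ← hpmin, min_eq_left h0, sub_self]
    rw [Finset.sum_eq_zero_iff_of_nonneg fun i hi =>
      mul_nonneg (hc i hi) (sub_nonneg.2 (min_le_left _ _))] at hsum
    simpa [hci.ne', sub_eq_zero] using hsum i hi

lemma mem_bConeOf_of_isBCoherentDiff {a : Fin n → ℝ} (h : IsBCoherentDiff B a S v c)
    (hc : ∀ i ∈ S, 0 ≤ c i) {i : ι} (hi : i ∈ S) (hci : 0 < c i) : v i ∈ bConeOf B a := by
  intro κ j
  have hκj := congrFun (congrFun (isBCoherentDiff_iff.1 h) κ) j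
  simp only [mutImage, Finset.sum_apply, Prod.ext_iff, Prod.fst_sum, Prod.snd_sum] at hκj
  exact signFollows_of_sum_eq hc hκj.1 hκj.2 hi hci

lemma sum_ite_mem_smul [DecidableEq ι] {M : Type*} [AddCommMonoid M] [Module ℝ M] {T : Finset ι}
    (hST : S ⊆ T) (f : ι → M) :
    ∑ i ∈ T, (if i ∈ S then c i else 0) • f i = ∑ i ∈ S, c i • f i := by
  simp only [ite_smul, zero_smul, Finset.sum_ite_mem, Finset.inter_eq_right.2 hST]

variable {R : Subring ℝ} {b : ι → Fin n → ℝ}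

lemma IndependentOver.ne_zero (hb : IndependentOver R B b) (i : ι) : b i ≠ 0 := by
  intro h0
  have hrel : IsBCoherentRel B {i} b 1 := by
    rw [isBCoherentRel_iff, Finset.sum_singleton, h0, mutImage_zero, smul_zero]
  exact one_ne_zero (hb.2 {i} 1 (fun _ _ => R.one_mem) hrel i (Finset.mem_singleton_self i))

lemma IndependentOver.eq_of_sum_eq (hb : IndependentOver R B b) {c' : ι → ℝ}
    (hc : ∀ i ∈ S, c i ∈ R) (hc' : ∀ i ∈ S, c' i ∈ R)
    (h : ∑ i ∈ S, c i • mutImage B (b i) = ∑ i ∈ S, c' i • mutImage B (b i)) :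
    ∀ i ∈ S, c i = c' i := by
  have hrel : IsBCoherentRel B S b (c - c') := by
    simp only [isBCoherentRel_iff, Pi.sub_apply, sub_smul, Finset.sum_sub_distrib, h, sub_self]
  intro i hi
  exact sub_eq_zero.1 (hb.2 S _ (fun i hi => R.sub_mem (hc i hi) (hc' i hi)) hrel i hi)

lemma IndependentOver.eq_of_eq_smul (hb : IndependentOver R B b) {i i' : ι} {r : ℝ}
    (hr : r ∈ R) (hr0 : 0 ≤ r) (h : b i' = r • b i) : i' = i := by
  classical
  by_contra hne
  have hsum : ∑ j ∈ {i, i'}, (if j = i' then (1 : ℝ) else 0) • mutImage B (b j) =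
      ∑ j ∈ {i, i'}, (if j = i then r else 0) • mutImage B (b j) := by
    simp [Finset.sum_pair (Ne.symm hne), hne, Ne.symm hne, h, mutImage_smul _ hr0]
  have := hb.eq_of_sum_eq ?_ ?_ hsum i' (by simp)
  · simp [hne] at this
  all_goals intros; split_ifs <;> simp [hr, R.one_mem, R.zero_mem]

lemma PositiveBasisOver.eq_smul_of_add_eq (hb : PositiveBasisOver R B b) {x y : Fin n → ℝ}
    (hx : ∀ j, x j ∈ R) (hy : ∀ j, y j ∈ R) {i : ι} (hxy : x + y = b i)
    (hsc : IsSignCoherentPair B x y) : ∃ t : ℝ, 0 ≤ t ∧ x = t • b i := by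
  classical
  obtain ⟨Sx, cx, hcx, hdx⟩ := hb.2 x hx
  obtain ⟨Sy, cy, hcy, hdy⟩ := hb.2 y hy
  set T := insert i (Sx ∪ Sy)
  have hSx : Sx ⊆ T := Finset.subset_union_left.trans (Finset.subset_insert _ _)
  have hSy : Sy ⊆ T := Finset.subset_union_right.trans (Finset.subset_insert _ _)
  set ex : ι → ℝ := fun j => if j ∈ Sx then cx j else 0
  set ey : ι → ℝ := fun j => if j ∈ Sy then cy j else 0
  have hex : ∀ j, 0 ≤ ex j ∧ ex j ∈ R := fun j => by
    by_cases hj : j ∈ Sx <;> simp [ex, hj, hcx, R.zero_mem]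
  have hey : ∀ j, 0 ≤ ey j ∧ ey j ∈ R := fun j => by
    by_cases hj : j ∈ Sy <;> simp [ey, hj, hcy, R.zero_mem]
  have hxT : mutImage B x = ∑ j ∈ T, ex j • mutImage B (b j) := by
    rw [isBCoherentDiff_iff.1 hdx, sum_ite_mem_smul hSx]
  have hyT : mutImage B y = ∑ j ∈ T, ey j • mutImage B (b j) := by
    rw [isBCoherentDiff_iff.1 hdy, sum_ite_mem_smul hSy]
  -- `b i` has two coherent expansions: itself, and the sum of those of `x` and `y`
  have hsum : ∑ j ∈ T, (ex j + ey j) • mutImage B (b j) =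
      ∑ j ∈ T, (if j = i then (1 : ℝ) else 0) • mutImage B (b j) := by
    calc ∑ j ∈ T, (ex j + ey j) • mutImage B (b j)
        = mutImage B x + mutImage B y := by simp only [add_smul, Finset.sum_add_distrib, hxT, hyT]
      _ = mutImage B (b i) := by rw [← mutImage_add hsc, hxy]
      _ = _ := by simp [T]
  have hcoef := hb.1.2.eq_of_sum_eq (fun j _ => R.add_mem (hex j).2 (hey j).2)
    (fun j _ => by split_ifs <;> simp [R.one_mem, R.zero_mem]) hsum
  have hex0 : ∀ j ∈ T, j ≠ i → ex j = 0 := fun j hj hji => by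
    have := hcoef j hj
    simp only [hji, if_false] at this
    linarith [(hex j).1, (hey j).1]
  refine ⟨ex i, (hex i).1, ?_⟩
  rw [eq_sum_of_mutImage_eq hxT, Finset.sum_eq_single_of_mem i (Finset.mem_insert_self _ _)
    fun j hj hji => by rw [hex0 j hj hji, zero_smul]]

end Coherent

lemma mem_ratSR {x : ℝ} : x ∈ ratSR ↔ ∃ q : ℚ, x = q := by
  simp only [ratSR, RingHom.mem_range, Rat.coe_castHom, eq_comm]

lemma inv_mem_ratSR {x : ℝ} (hx : x ∈ ratSR) : x⁻¹ ∈ ratSR := by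
  obtain ⟨q, rfl⟩ := mem_ratSR.1 hx
  exact mem_ratSR.2 ⟨q⁻¹, by push_cast; rfl⟩

lemma mem_ratSR_of_eq_smul {x y : Fin n → ℝ} (hx : ∀ j, x j ∈ ratSR) (hy : ∀ j, y j ∈ ratSR)
    (hy0 : y ≠ 0) {r : ℝ} (h : x = r • y) : r ∈ ratSR := by
  obtain ⟨j, hj⟩ := Function.ne_iff.1 hy0
  have hr : r = x j * (y j)⁻¹ := by
    rw [h, Pi.smul_apply, smul_eq_mul, mul_inv_cancel_right₀ hj]
  exact hr ▸ ratSR.mul_mem (hx j) (inv_mem_ratSR (hy j))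

lemma mem_rayOf_self (v : Fin n → ℝ) : v ∈ rayOf v := ⟨1, zero_le_one, (one_smul ℝ v).symm⟩

lemma rayOf_smul (v : Fin n → ℝ) {t : ℝ} (ht : 0 < t) : rayOf (t • v) = rayOf v := by
  ext x
  constructor
  · rintro ⟨s, hs, rfl⟩
    exact ⟨s * t, mul_nonneg hs ht.le, smul_smul s t v⟩
  · rintro ⟨s, hs, rfl⟩
    exact ⟨s / t, div_nonneg hs ht.le, by rw [smul_smul, div_mul_cancel₀ _ ht.ne']⟩

lemma exists_pos_of_mem_rayOf {v x : Fin n → ℝ} (hx : x ∈ rayOf v) (hx0 : x ≠ 0) :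
    ∃ t : ℝ, 0 < t ∧ x = t • v := by
  obtain ⟨t, ht, rfl⟩ := hx
  exact ⟨t, ht.lt_of_ne (by rintro rfl; simp at hx0), rfl⟩

lemma IsRayOf.eq_rayOf {F : Set (Set (Fin n → ℝ))} {C : Set (Fin n → ℝ)} (h : IsRayOf F C)
    {x : Fin n → ℝ} (hx : x ∈ C) (hx0 : x ≠ 0) : C = rayOf x := by
  obtain ⟨-, v, -, rfl⟩ := h
  obtain ⟨t, ht, rfl⟩ := exists_pos_of_mem_rayOf hx hx0
  exact (rayOf_smul v ht).symm

lemma isConvexCone_rayOf (v : Fin n → ℝ) : IsConvexCone (rayOf v) := by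
  refine ⟨?_, ?_⟩
  · rintro _ ⟨s, hs, rfl⟩ _ ⟨t, ht, rfl⟩
    exact ⟨s + t, add_nonneg hs ht, (add_smul s t v).symm⟩
  · rintro _ ⟨s, hs, rfl⟩ r hr
    exact ⟨r * s, mul_nonneg hr.le hs, smul_smul r s v⟩

lemma IsConvexCone.rayOf_subset {D : Set (Fin n → ℝ)} (hD : IsConvexCone D)
    (h0 : (0 : Fin n → ℝ) ∈ D) {v : Fin n → ℝ} (hv : v ∈ D) : rayOf v ⊆ D := by
  rintro _ ⟨t, ht, rfl⟩
  rcases ht.eq_or_lt with rfl | ht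
  · rwa [zero_smul]
  · exact hD.2 v hv t ht

lemma IsConvexCone.convex {D : Set (Fin n → ℝ)} (hD : IsConvexCone D) : Convex ℝ D := by
  intro x hx y hy α β hα hβ hαβ
  rcases hα.eq_or_lt with rfl | hα
  · simpa [show β = 1 by linarith] using hy
  rcases hβ.eq_or_lt with rfl | hβ
  · simpa [show α = 1 by linarith] using hx
  exact hD.1 _ (hD.2 x hx α hα) _ (hD.2 y hy β hβ)

lemma IsConvexCone.sum_mem {ι : Type*} {D : Set (Fin n → ℝ)} (hD : IsConvexCone D)
    (h0 : (0 : Fin n → ℝ) ∈ D) {S : Finset ι} {f : ι → Fin n → ℝ} (hf : ∀ i ∈ S, f i ∈ D) :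
    ∑ i ∈ S, f i ∈ D :=
  Finset.sum_induction _ (· ∈ D) (fun x y hx hy => hD.1 x hx y hy) h0 hf

section RationalCone

variable {C : Set (Fin n → ℝ)}

lemma IsRationalCone.zero_mem (hC : IsRationalCone C) : (0 : Fin n → ℝ) ∈ C := by
  obtain ⟨k, v, -, rfl⟩ := hC
  exact ⟨0, fun _ => le_rfl, by simp⟩

lemma IsRationalCone.exists_generators (hC : IsRationalCone C) :
    ∃ (k : ℕ) (v : Fin k → Fin n → ℝ), (∀ m, v m ∈ C ∧ ∀ j, ∃ q : ℚ, v m j = q) ∧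
      C = {x | ∃ c : Fin k → ℝ, (∀ m, 0 ≤ c m) ∧ x = ∑ m, c m • v m} := by
  obtain ⟨k, v, hv, rfl⟩ := hC
  refine ⟨k, v, fun m => ⟨⟨Pi.single m 1, fun m' => ?_, by simp [Pi.single_apply]⟩, hv m⟩, rfl⟩
  by_cases h : m' = m <;> simp [h]

lemma IsRationalCone.subset_of_forall_rat {K : Set (Fin n → ℝ)} (hC : IsRationalCone C)
    (hK : IsConvexCone K) (hK0 : (0 : Fin n → ℝ) ∈ K)
    (h : ∀ x ∈ C, (∀ j, ∃ q : ℚ, x j = q) → x ∈ K) : C ⊆ K := by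
  obtain ⟨k, v, hv, rfl⟩ := hC.exists_generators
  rintro _ ⟨c, hc, rfl⟩
  exact hK.sum_mem hK0 fun m _ =>
    hK.rayOf_subset hK0 (h _ (hv m).1 (hv m).2) ⟨c m, hc m, rfl⟩

lemma IsRationalCone.exists_rat_ne_zero (hC : IsRationalCone C) {x : Fin n → ℝ} (hx : x ∈ C)
    (hx0 : x ≠ 0) : ∃ w ∈ C, w ≠ 0 ∧ ∀ j, ∃ q : ℚ, w j = q := by
  obtain ⟨k, v, hv, rfl⟩ := hC.exists_generators
  obtain ⟨c, -, rfl⟩ := hx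
  obtain ⟨m, hm⟩ : ∃ m, v m ≠ 0 := by
    by_contra! h
    exact hx0 (Finset.sum_eq_zero fun m _ => by rw [h m, smul_zero])
  exact ⟨v m, (hv m).1, hm, (hv m).2⟩

end RationalCone

section Face

variable {D : Set (Fin n → ℝ)} {u : Fin n → ℝ}

/-- The smallest face of the convex cone `D` containing `u ∈ D`. -/
def faceAt (D : Set (Fin n → ℝ)) (u : Fin n → ℝ) : Set (Fin n → ℝ) :=
  {x | x ∈ D ∧ ∃ ε : ℝ, 0 < ε ∧ u - ε • x ∈ D}

lemma sub_smul_mem_of_le (hD : Convex ℝ D) (hu : u ∈ D) {x : Fin n → ℝ} {ε ε' : ℝ}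
    (hε' : 0 < ε') (hle : ε' ≤ ε) (h : u - ε • x ∈ D) : u - ε' • x ∈ D := by
  have hε : 0 < ε := hε'.trans_le hle
  have := hD.add_smul_mem hu (y := -(ε • x)) (by rwa [← sub_eq_add_neg])
    (t := ε' / ε) ⟨by positivity, (div_le_one hε).2 hle⟩
  rwa [smul_neg, smul_smul, div_mul_cancel₀ _ hε.ne', ← sub_eq_add_neg] at this

lemma mem_faceAt_self (hD : IsConvexCone D) (hu : u ∈ D) : u ∈ faceAt D u := by
  refine ⟨hu, 1 / 2, by norm_num, ?_⟩
  convert hD.2 u hu (1 / 2) (by norm_num) using 1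
  module

lemma convex_faceAt (hD : IsConvexCone D) (hu : u ∈ D) : Convex ℝ (faceAt D u) := by
  rintro x ⟨hxD, εx, hεx, hx⟩ y ⟨hyD, εy, hεy, hy⟩ α β hα hβ hαβ
  have hmin : 0 < min εx εy := lt_min hεx hεy
  refine ⟨hD.convex hxD hyD hα hβ hαβ, min εx εy, hmin, ?_⟩
  convert hD.convex (sub_smul_mem_of_le hD.convex hu hmin (min_le_left _ _) hx)
    (sub_smul_mem_of_le hD.convex hu hmin (min_le_right _ _) hy) hα hβ hαβ using 1
  obtain rfl : β = 1 - α := by linarith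
  module

lemma isFaceOf_faceAt (hD : IsConvexCone D) (hu : u ∈ D) : IsFaceOf D (faceAt D u) := by
  refine ⟨fun x hx => hx.1, convex_faceAt hD hu, ?_⟩
  rintro x y hseg ⟨_, ⟨α, β, hα, hβ, hαβ, rfl⟩, -, ε, hε, hz⟩
  have hx : x ∈ D := hseg (left_mem_segment ℝ x y)
  have hy : y ∈ D := hseg (right_mem_segment ℝ x y)
  refine (convex_faceAt hD hu).segment_subset ⟨hx, ε * α, mul_pos hε hα, ?_⟩
    ⟨hy, ε * β, mul_pos hε hβ, ?_⟩
  · convert hD.1 _ hz _ (hD.2 y hy _ (mul_pos hε hβ)) using 1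
    module
  · convert hD.1 _ hz _ (hD.2 x hx _ (mul_pos hε hα)) using 1
    module

lemma IsFaceOf.mem_of_add_mem {F : Set (Fin n → ℝ)} (hD : IsConvexCone D) (hF : IsFaceOf D F)
    (hFc : IsConvexCone F) {p q : Fin n → ℝ} (hp : p ∈ D) (hq : q ∈ D) (hpq : p + q ∈ F) :
    p ∈ F := by
  have h2p : (2 : ℝ) • p ∈ F := by
    refine hF.2.2 _ ((2 : ℝ) • q) (hD.convex.segment_subset (hD.2 p hp 2 two_pos)
      (hD.2 q hq 2 two_pos)) ⟨p + q, ⟨1 / 2, 1 / 2, by norm_num, by norm_num, by norm_num, ?_⟩,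
        hpq⟩ (left_mem_segment ℝ _ _)
    module
  simpa [smul_smul] using hFc.2 _ h2p (1 / 2) (by norm_num)

end Face

section RationalPart

variable {ι : Type*} {b : ι → Fin n → ℝ} {F' : Set (Set (Fin n → ℝ))}

lemma PositiveBasisOver.mem_rayOf_of_mem_faceAt (hb : PositiveBasisOver ratSR B b) {i : ι}
    {D : Set (Fin n → ℝ)} (hD : IsConvexCone D) (hDb : D ⊆ bConeOf B (b i)) (hbD : b i ∈ D)
    {x : Fin n → ℝ} (hx : x ∈ faceAt D (b i)) (hxq : ∀ j, ∃ q : ℚ, x j = q) :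
    x ∈ rayOf (b i) := by
  obtain ⟨hxD, ε, hε, hεx⟩ := hx
  -- shrink `ε` to a rational `q`: then `b i` splits into the rational vectors `q x`, `b i - q x`
  obtain ⟨q, hq0, hqε⟩ := exists_rat_btwn hε
  have hq0' : (0 : ℝ) < q := by exact_mod_cast hq0
  have hqx : (q : ℝ) • x ∈ D := hD.2 x hxD q hq0'
  have hrest : b i - (q : ℝ) • x ∈ D := sub_smul_mem_of_le hD.convex hbD hq0' hqε.le hεx
  have hqxQ : ∀ j, ((q : ℝ) • x) j ∈ ratSR := fun j =>
    ratSR.mul_mem (mem_ratSR.2 ⟨q, rfl⟩) (mem_ratSR.2 (hxq j))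
  obtain ⟨t, ht, hqxt⟩ := hb.eq_smul_of_add_eq hqxQ
    (fun j => ratSR.sub_mem (hb.1.1.1 i j) (hqxQ j)) (add_sub_cancel _ _)
    (isSignCoherentPair_of_mem_bConeOf (hDb hqx) (hDb hrest))
  refine ⟨t / q, div_nonneg ht hq0'.le, ?_⟩
  rw [div_eq_inv_mul, ← smul_smul, ← hqxt, smul_smul, inv_mul_cancel₀ hq0'.ne', one_smul]

lemma PositiveBasisOver.isRayOf_rayOf (hF' : IsRationalPart (MutFan B) F')
    (hb : PositiveBasisOver ratSR B b) (i : ι) : IsRayOf F' (rayOf (b i)) := by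
  obtain ⟨D, hDF', hDb, -, hDrat⟩ := hF'.2.2.2 _ (bConeOf_mem_mutFan B (b i))
  have hbD : b i ∈ D := hDrat _ (self_mem_bConeOf _) fun j => mem_ratSR.1 (hb.1.1.1 i j)
  have hD : IsConvexCone D := (hF'.1.1 D hDF').2
  have hG : faceAt D (b i) ∈ F' := hF'.1.2.1 D hDF' _ (isFaceOf_faceAt hD hbD)
  have hGrat : IsRationalCone (faceAt D (b i)) := hF'.2.1 _ hG
  suffices faceAt D (b i) = rayOf (b i) from ⟨this ▸ hG, b i, hb.1.2.ne_zero i, rfl⟩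
  refine (hGrat.subset_of_forall_rat (isConvexCone_rayOf _) ⟨0, le_rfl, (zero_smul _ _).symm⟩
    fun x hx hxq => hb.mem_rayOf_of_mem_faceAt hD hDb hbD hx hxq).antisymm ?_
  exact (hF'.1.1 _ hG).2.rayOf_subset hGrat.zero_mem (mem_faceAt_self hD hbD)

lemma IndependentOver.eq_of_mem_isRayOf (hb : IndependentOver ratSR B b) {C : Set (Fin n → ℝ)}
    (hC : IsRayOf F' C) {i i' : ι} (hi : b i ∈ C) (hi' : b i' ∈ C) : i' = i := by
  obtain ⟨r, hr, hbr⟩ := hC.eq_rayOf hi (hb.ne_zero i) ▸ hi'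
  exact hb.eq_of_eq_smul (mem_ratSR_of_eq_smul (hb.1 i') (hb.1 i) (hb.ne_zero i) hbr) hr hbr

lemma PositiveBasisOver.exists_mem_of_isRayOf (hF' : IsRationalPart (MutFan B) F')
    (hb : PositiveBasisOver ratSR B b) {C : Set (Fin n → ℝ)} (hC : IsRayOf F' C) :
    ∃ i, b i ∈ C := by
  classical
  obtain ⟨hCF', v, hv0, hCv⟩ := hC
  obtain ⟨w, hwC, hw0, hwq⟩ :=
    (hF'.2.1 C hCF').exists_rat_ne_zero (hCv ▸ mem_rayOf_self v) hv0
  have hCw : C = rayOf w := IsRayOf.eq_rayOf ⟨hCF', v, hv0, hCv⟩ hwC hw0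
  obtain ⟨D, hDF', -, -, hDrat⟩ := hF'.2.2.2 _ (bConeOf_mem_mutFan B w)
  have hD : IsConvexCone D := (hF'.1.1 D hDF').2
  have hD0 : (0 : Fin n → ℝ) ∈ D := (hF'.2.1 D hDF').zero_mem
  have hCD : C ⊆ D := hCw ▸ hD.rayOf_subset hD0 (hDrat w (self_mem_bConeOf w) hwq)
  have hface : IsFaceOf D C := by
    simpa [Set.inter_eq_left.2 hCD] using (hF'.1.2.2 C hCF' D hDF').2
  -- a positive coherent expansion of `w` has some term `c i • b i` lying in `D`, hence in `C`
  obtain ⟨S, c, hc, hdiff⟩ := hb.2 w fun j => mem_ratSR.2 (hwq j)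
  have hwsum : w = ∑ i ∈ S, c i • b i := eq_sum_of_mutImage_eq (isBCoherentDiff_iff.1 hdiff)
  obtain ⟨i, hiS, hci⟩ : ∃ i ∈ S, 0 < c i := by
    by_contra! h
    exact hw0 (hwsum ▸ Finset.sum_eq_zero fun i hi => by
      rw [le_antisymm (h i hi) (hc i hi).2, zero_smul])
  have hterm : ∀ j ∈ S, c j • b j ∈ D := fun j hj => by
    rcases (hc j hj).2.eq_or_lt with hcj | hcj
    · rwa [← hcj, zero_smul]
    · refine hD.2 _ (hDrat _ ?_ fun k => mem_ratSR.1 (hb.1.1.1 j k)) _ hcj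
      exact mem_bConeOf_of_isBCoherentDiff hdiff (fun j hj => (hc j hj).2) hj hcj
  have hCc : IsConvexCone C := hCw ▸ isConvexCone_rayOf w
  have hciC : c i • b i ∈ C := hface.mem_of_add_mem hD hCc (hterm i hiS)
    (hD.sum_mem hD0 (S := S.erase i) fun j hj => hterm j (Finset.mem_of_mem_erase hj))
    (by rwa [Finset.add_sum_erase S (fun j => c j • b j) hiS, ← hwsum])
  refine ⟨i, ?_⟩
  have := hCc.2 _ hciC _ (inv_pos.2 hci)
  rwa [smul_smul, inv_mul_cancel₀ hci.ne', one_smul] at this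

end RationalPart

lemma PositiveBasisOver.of_eq_smul {R : Subring ℝ} {ι ι' : Type*} {v : ι' → Fin n → ℝ}
    (hv : PositiveBasisOver R B v) (E : ι ≃ ι') {q : ι → ℝ} (hq : ∀ i, 0 < q i)
    (hqR : ∀ i, q i ∈ R) (hqR' : ∀ i, (q i)⁻¹ ∈ R) {b : ι → Fin n → ℝ}
    (hb : ∀ i, b i = q i • v (E i)) : PositiveBasisOver R B b := by
  have himage (i : ι) : mutImage B (b i) = q i • mutImage B (v (E i)) := by
    rw [hb i, mutImage_smul _ (hq i).le]
  have hto (S' : Finset ι') (c' : ι' → ℝ) : ∑ i' ∈ S', c' i' • mutImage B (v i') =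
      ∑ i ∈ S'.map E.symm.toEmbedding, ((q i)⁻¹ * c' (E i)) • mutImage B (b i) := by
    simp only [Finset.sum_map, Equiv.coe_toEmbedding, Equiv.apply_symm_apply, himage, smul_smul]
    exact Finset.sum_congr rfl fun i' _ => by
      rw [mul_right_comm, inv_mul_cancel₀ (hq _).ne', one_mul]
  have hfrom (S : Finset ι) (c : ι → ℝ) : ∑ i ∈ S, c i • mutImage B (b i) =
      ∑ i' ∈ S.map E.toEmbedding, (c (E.symm i') * q (E.symm i')) • mutImage B (v i') := by
    simp [Finset.sum_map, himage, smul_smul]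
  have hcoef {S' : Finset ι'} {c' : ι' → ℝ} (hc' : ∀ i' ∈ S', c' i' ∈ R) :
      ∀ i ∈ S'.map E.symm.toEmbedding, (q i)⁻¹ * c' (E i) ∈ R := by
    simp only [Finset.mem_map_equiv, Equiv.symm_symm]
    exact fun i hi => R.mul_mem (hqR' i) (hc' _ hi)
  have hvR := hv.1.1.1
  have hbR : ∀ i j, b i j ∈ R := fun i j => by
    rw [hb i]; exact R.mul_mem (hqR i) (hvR _ j)
  refine ⟨⟨⟨hbR, fun a ha => ?_⟩, hbR, fun S c hc hrel => ?_⟩, fun a ha => ?_⟩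
  · obtain ⟨S', c', hc', hd⟩ := hv.1.1.2 a ha
    exact ⟨_, _, hcoef hc', isBCoherentDiff_iff.2 (hto S' c' ▸ isBCoherentDiff_iff.1 hd)⟩
  · rw [isBCoherentRel_iff, hfrom] at hrel
    have hzero := hv.1.2.2 _ _ (by
      simp only [Finset.mem_map_equiv]
      exact fun i' hi' => R.mul_mem (hc _ hi') (hqR _)) (isBCoherentRel_iff.2 hrel)
    intro i hi
    simpa [(hq i).ne'] using hzero (E i) (by simpa using hi)
  · obtain ⟨S', c', hc', hd⟩ := hv.2 a ha
    refine ⟨_, _, fun i hi => ⟨hcoef (fun i' hi' => (hc' i' hi').1) i hi, ?_⟩,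
      isBCoherentDiff_iff.2 (hto S' c' ▸ isBCoherentDiff_iff.1 hd)⟩
    simp only [Finset.mem_map_equiv, Equiv.symm_symm] at hi
    exact mul_nonneg (inv_nonneg.2 (hq i).le) (hc' _ hi).2

section RayTransversal

variable {ι : Type*} {b : ι → Fin n → ℝ} {F' : Set (Set (Fin n → ℝ))}

def OneVectorPerRay (F' : Set (Set (Fin n → ℝ))) (b : ι → Fin n → ℝ) : Prop :=
  (∀ i, b i ≠ 0 ∧ ∃ C, IsRayOf F' C ∧ b i ∈ C) ∧ ∀ C, IsRayOf F' C → ∃! i : ι, b i ∈ C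

lemma OneVectorPerRay.isRayOf_rayOf (h : OneVectorPerRay F' b) (i : ι) :
    IsRayOf F' (rayOf (b i)) := by
  obtain ⟨hb0, C, hC, hbC⟩ := h.1 i
  exact hC.eq_rayOf hbC hb0 ▸ hC

lemma OneVectorPerRay.bijective (h : OneVectorPerRay F' b) :
    Function.Bijective fun i => (⟨rayOf (b i), h.isRayOf_rayOf i⟩ : {C // IsRayOf F' C}) := by
  refine ⟨fun i i' hii' => ?_, fun ⟨C, hC⟩ => ?_⟩
  · have hi' : b i' ∈ rayOf (b i) := by
      rw [show rayOf (b i) = rayOf (b i') from congrArg Subtype.val hii']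
      exact mem_rayOf_self _
    exact (h.2 _ (h.isRayOf_rayOf i)).unique (mem_rayOf_self _) hi'
  · obtain ⟨i, hi, -⟩ := h.2 C hC
    exact ⟨i, Subtype.ext (hC.eq_rayOf hi (h.1 i).1).symm⟩

noncomputable def OneVectorPerRay.rayEquiv (h : OneVectorPerRay F' b) :
    ι ≃ {C // IsRayOf F' C} :=
  Equiv.ofBijective _ h.bijective

lemma PositiveBasisOver.oneVectorPerRay (hF' : IsRationalPart (MutFan B) F')
    (hb : PositiveBasisOver ratSR B b) : OneVectorPerRay F' b :=
  ⟨fun i => ⟨hb.1.2.ne_zero i, _, hb.isRayOf_rayOf hF' i, mem_rayOf_self _⟩,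
    fun _ hC => (hb.exists_mem_of_isRayOf hF' hC).imp fun _ hi =>
      ⟨hi, fun _ hi' => hb.1.2.eq_of_mem_isRayOf hC hi hi'⟩⟩

lemma OneVectorPerRay.positiveBasisOver {ι' : Type*} {v : ι' → Fin n → ℝ}
    (hF' : IsRationalPart (MutFan B) F') (hv : PositiveBasisOver ratSR B v)
    (hbQ : ∀ i j, b i j ∈ ratSR) (hb : OneVectorPerRay F' b) : PositiveBasisOver ratSR B b := by
  have hv' := hv.oneVectorPerRay hF'
  set E := hb.rayEquiv.trans hv'.rayEquiv.symm
  have hray (i : ι) : rayOf (v (E i)) = rayOf (b i) :=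
    congrArg Subtype.val (hv'.rayEquiv.apply_symm_apply (hb.rayEquiv i))
  choose q hq hvq using fun i =>
    exists_pos_of_mem_rayOf (hray i ▸ mem_rayOf_self (v (E i))) (hv'.1 (E i)).1
  have hqQ (i : ι) : q i ∈ ratSR :=
    mem_ratSR_of_eq_smul (hv.1.1.1 (E i)) (hbQ i) (hb.1 i).1 (hvq i)
  refine hv.of_eq_smul E (fun i => inv_pos.2 (hq i)) (fun i => inv_mem_ratSR (hqQ i))
    (fun i => (inv_inv (q i)).symm ▸ hqQ i) fun i => ?_
  rw [hvq, smul_smul, inv_mul_cancel₀ (hq i).ne', one_smul]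

end RayTransversal

end

theorem positiveBasisOver_rat_iff_rays_general {n : ℕ}
    (B : Matrix (Fin n) (Fin n) ℤ)
    (hex : ∃ V : Set (Fin n → ℝ), PositiveBasisOver ratSR B (fun v : V => (v : Fin n → ℝ)))
    (F' : Set (Set (Fin n → ℝ))) (hF' : IsRationalPart (MutFan B) F')
    {I : Type} (b : I → Fin n → ℝ) (hbQ : ∀ i j, b i j ∈ ratSR) :
    PositiveBasisOver ratSR B b ↔
      ((∀ i, b i ≠ 0 ∧ ∃ C, IsRayOf F' C ∧ b i ∈ C) ∧
       ∀ C, IsRayOf F' C → ∃! i : I, b i ∈ C) := by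
  obtain ⟨V, hV⟩ := hex
  exact ⟨fun hb => hb.oneVectorPerRay hF',
    fun hb => OneVectorPerRay.positiveBasisOver hF' hV hbQ hb⟩

/-- Suppose a positive ℚ-basis for `B` exists and `ℱ_B` has a rational
part `F'`. Then a family of vectors in `ℚⁿ` is a positive ℚ-basis for `B` if and only if it
consists of exactly one nonzero vector in each ray of `F'`. -/
theorem positiveBasisOver_rat_iff_rays {n : ℕ} (hn : 1 ≤ n)
    (B : Matrix (Fin n) (Fin n) ℤ) (hB : IsExchangeMatrix B)
    (hex : ∃ V : Set (Fin n → ℝ), PositiveBasisOver ratSR B (fun v : V => (v : Fin n → ℝ)))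
    (F' : Set (Set (Fin n → ℝ))) (hF' : IsRationalPart (MutFan B) F')
    {I : Type} (b : I → Fin n → ℝ) (hbQ : ∀ i j, b i j ∈ ratSR) :
    PositiveBasisOver ratSR B b ↔
      ((∀ i, b i ≠ 0 ∧ ∃ C, IsRayOf F' C ∧ b i ∈ C) ∧
       ∀ C, IsRayOf F' C → ∃! i : I, b i ∈ C) :=
  positiveBasisOver_rat_iff_rays_general B hex F' hF' b hbQ

end MutationFanPaper
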